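/- Let u = (2√2 − 1)/14 (the positive root of 28u² + 4u − 1 = 0). There exist 22 unit vectors x_1, …, x_22 in EuclideanSpace ℝ (Fin 8) such that ⟨x_i, x_j⟩ ≤ u for all i ≠ j. -/

import Mathlib

/-!
Take 8 points at height `√((1 + 7u)/8)` forming a regular simplex, and 14 points at height `-√u`
forming a cross-polytope along the coordinate axes; the heights make all inner products within each
group at most `u`. The simplex comes from a Hadamard matrix, so every unit vertex has all coordinates
`±1/√7` with respect to the cross-polytope axes, and a mixed inner product is at most
`(1 - u - √(u (1 + 7u)))/√8`. At the root of `28u² + 4u - 1 = 0` one has `u (1 + 7u) = 1/4` and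
`u (1 + 2√2) = 1/2`, which makes this bound exactly `u`.
-/

open scoped InnerProductSpace

def IsSphericalCode {ι E : Type*} [NormedAddCommGroup E] [InnerProductSpace ℝ E] (x : ι → E)
    (u : ℝ) : Prop :=
  (∀ i, ‖x i‖ = 1) ∧ Pairwise fun i j => ⟪x i, x j⟫_ℝ ≤ u

namespace IsSphericalCode

variable {ι κ E : Type*} [NormedAddCommGroup E] [InnerProductSpace ℝ E] {x : ι → E} {u : ℝ}

theorem of_inner (hself : ∀ i, ⟪x i, x i⟫_ℝ = 1) (hne : Pairwise fun i j => ⟪x i, x j⟫_ℝ ≤ u) :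
    IsSphericalCode x u := by
  refine ⟨fun i => ?_, hne⟩
  have h := hself i
  rw [real_inner_self_eq_norm_sq, pow_eq_one_iff_of_nonneg (norm_nonneg _) two_ne_zero] at h
  exact h

theorem comp (hx : IsSphericalCode x u) {f : κ → ι} (hf : Function.Injective f) :
    IsSphericalCode (x ∘ f) u :=
  ⟨fun i => hx.1 (f i), fun _ _ hij => hx.2 (hf.ne hij)⟩

end IsSphericalCode

namespace SphericalCode22

noncomputable def cons {n : ℕ} (h : ℝ) (v : EuclideanSpace ℝ (Fin n)) :
    EuclideanSpace ℝ (Fin (n + 1)) :=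
  WithLp.toLp 2 (Fin.cons h v.ofLp)

theorem inner_cons_cons {n : ℕ} (h h' : ℝ) (v v' : EuclideanSpace ℝ (Fin n)) :
    ⟪cons h v, cons h' v'⟫_ℝ = h * h' + ⟪v, v'⟫_ℝ := by
  simp only [cons, PiLp.inner_apply, Fin.sum_univ_succ, Fin.cons_zero, Fin.cons_succ,
    RCLike.inner_apply, conj_trivial]
  ring

/-- The Sylvester–Hadamard matrix `(-1) ^ ⟨i, j⟩` of order 8, with `i` and `j` read as bit vectors
in `𝔽₂³`, without its all-ones column `j = 0`: column `k` is `j = k + 1`. -/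
def hadamard (i : Fin 8) (k : Fin 7) : ℤ :=
  (-1) ^ ∑ b : Fin 3, (i.val / 2 ^ b.val % 2) * ((k.val + 1) / 2 ^ b.val % 2)

theorem hadamard_eq_one_or_neg_one : ∀ i k, hadamard i k = 1 ∨ hadamard i k = -1 := by
  decide

theorem sum_hadamard_mul_self : ∀ i, ∑ k, hadamard i k * hadamard i k = 7 := by
  decide

theorem sum_hadamard_mul_of_ne : ∀ i j, i ≠ j → ∑ k, hadamard i k * hadamard j k = -1 := by
  decide

def simplex (i : Fin 8) : EuclideanSpace ℝ (Fin 7) :=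
  WithLp.toLp 2 fun k => (hadamard i k : ℝ)

theorem inner_simplex (i j : Fin 8) :
    ⟪simplex i, simplex j⟫_ℝ = ((∑ k, hadamard i k * hadamard j k : ℤ) : ℝ) := by
  simp [simplex, PiLp.inner_apply, mul_comm]

theorem abs_simplex_apply (i : Fin 8) (k : Fin 7) : |(simplex i).ofLp k| = 1 := by
  rcases hadamard_eq_one_or_neg_one i k with h | h <;> simp [simplex, h]

variable (u : ℝ)

noncomputable def capPoint (i : Fin 8) : EuclideanSpace ℝ (Fin 8) :=
  cons √((1 + 7 * u) / 8) (√((1 - u) / 8) • simplex i)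

noncomputable def crossPoint (k : Fin 7) (ε : Bool) : EuclideanSpace ℝ (Fin 8) :=
  cons (-√u) (EuclideanSpace.single k (if ε then √(1 - u) else -√(1 - u)))

noncomputable def code : Fin 8 ⊕ Fin 7 × Bool → EuclideanSpace ℝ (Fin 8)
  | .inl i => capPoint u i
  | .inr (k, ε) => crossPoint u k ε

variable {u}

theorem inner_capPoint (hu₀ : 0 ≤ u) (hu₁ : u ≤ 1) (i j : Fin 8) :
    ⟪capPoint u i, capPoint u j⟫_ℝ = (1 + 7 * u) / 8 + (1 - u) / 8 * ⟪simplex i, simplex j⟫_ℝ := by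
  rw [capPoint, capPoint, inner_cons_cons, real_inner_smul_left, real_inner_smul_right,
    ← mul_assoc, Real.mul_self_sqrt (by linarith), Real.mul_self_sqrt (by linarith)]

theorem inner_crossPoint (hu₀ : 0 ≤ u) (hu₁ : u ≤ 1) (k k' : Fin 7) (ε ε' : Bool) :
    ⟪crossPoint u k ε, crossPoint u k' ε'⟫_ℝ =
      u + if k = k' then (if ε = ε' then 1 - u else -(1 - u)) else 0 := by
  have hu : √u * √u = u := Real.mul_self_sqrt hu₀
  have hv : √(1 - u) * √(1 - u) = 1 - u := Real.mul_self_sqrt (by linarith)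
  rw [crossPoint, crossPoint, inner_cons_cons, EuclideanSpace.inner_single_left,
    PiLp.single_apply, neg_mul_neg, hu, conj_trivial]
  rcases eq_or_ne k k' with rfl | hk
  · cases ε <;> cases ε' <;> simp [hv]
  · simp [hk]

theorem sqrt_mul_sqrt_sub_sqrt_mul_sqrt_le (hu₀ : 0 ≤ u) (hu₁ : u ≤ 1)
    (hcap : 1 - u ≤ √8 * u + √(u * (1 + 7 * u))) :
    √((1 - u) / 8) * √(1 - u) - √((1 + 7 * u) / 8) * √u ≤ u := by
  have h8 : ∀ x, √8 * √(x / 8) = √x := fun x => by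
    rw [← Real.sqrt_mul (by norm_num)]
    ring_nf
  have hlow : √8 * (√((1 - u) / 8) * √(1 - u)) = 1 - u := by
    rw [← mul_assoc, h8, Real.mul_self_sqrt (by linarith)]
  have hhigh : √8 * (√((1 + 7 * u) / 8) * √u) = √(u * (1 + 7 * u)) := by
    rw [← mul_assoc, h8, ← Real.sqrt_mul (by linarith), mul_comm]
  refine le_of_mul_le_mul_left ?_ (by positivity : (0 : ℝ) < √8)
  rw [mul_sub, hlow, hhigh]
  linarith

theorem inner_capPoint_crossPoint_le (hu₀ : 0 ≤ u) (hu₁ : u ≤ 1)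
    (hcap : 1 - u ≤ √8 * u + √(u * (1 + 7 * u))) (i : Fin 8) (k : Fin 7) (ε : Bool) :
    ⟪capPoint u i, crossPoint u k ε⟫_ℝ ≤ u := by
  set t : ℝ := if ε then √(1 - u) else -√(1 - u) with ht
  have hcross : t * (simplex i).ofLp k ≤ √(1 - u) :=
    calc t * (simplex i).ofLp k ≤ |t * (simplex i).ofLp k| := le_abs_self _
      _ = √(1 - u) := by rw [abs_mul, abs_simplex_apply, mul_one, ht]; cases ε <;> simp
  rw [capPoint, crossPoint, inner_cons_cons, real_inner_smul_left,
    EuclideanSpace.inner_single_right, conj_trivial, ← ht]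
  nlinarith [Real.sqrt_nonneg ((1 - u) / 8), sqrt_mul_sqrt_sub_sqrt_mul_sqrt_le hu₀ hu₁ hcap]

theorem isSphericalCode_code (hu₀ : 0 ≤ u) (hu₁ : u ≤ 1)
    (hcap : 1 - u ≤ √8 * u + √(u * (1 + 7 * u))) : IsSphericalCode (code u) u := by
  refine .of_inner ?_ ?_
  · rintro (i | ⟨k, ε⟩)
    · rw [code, inner_capPoint hu₀ hu₁, inner_simplex, sum_hadamard_mul_self]
      push_cast
      ring
    · rw [code, inner_crossPoint hu₀ hu₁]
      simp
  · rintro (i | ⟨k, ε⟩) (j | ⟨k', ε'⟩) hne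
    · rw [code, code, inner_capPoint hu₀ hu₁, inner_simplex,
        sum_hadamard_mul_of_ne i j fun h => hne (congrArg _ h)]
      push_cast
      linarith
    · exact inner_capPoint_crossPoint_le hu₀ hu₁ hcap i k' ε'
    · rw [code, code, real_inner_comm]
      exact inner_capPoint_crossPoint_le hu₀ hu₁ hcap j k ε
    · rw [code, code, inner_crossPoint hu₀ hu₁]
      split_ifs with hk hε
      · exact absurd (by rw [hk, hε]) hne
      all_goals linarith

theorem one_sub_le_of_eq_root (hu : u = (2 * √2 - 1) / 14) :
    1 - u ≤ √8 * u + √(u * (1 + 7 * u)) := by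
  have h2 : √2 * √2 = 2 := Real.mul_self_sqrt (by norm_num)
  have h8 : √8 = 2 * √2 := by
    rw [show (8 : ℝ) = 2 ^ 2 * 2 by norm_num, Real.sqrt_mul (by norm_num),
      Real.sqrt_sq (by norm_num)]
  have hquad : u * (1 + 7 * u) = (1 / 2) ^ 2 := by
    subst hu
    linear_combination (1 / 7 : ℝ) * h2
  rw [hquad, Real.sqrt_sq (by norm_num), h8, hu]
  nlinarith [h2]

end SphericalCode22

open SphericalCode22

/-- Let `u = (2 * Real.sqrt 2 - 1) / 14` (the positive root of 28u² + 4u - 1 = 0). There exist 22 unit vectors in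
`EuclideanSpace ℝ (Fin 8)` whose pairwise inner products are all at most `u`. -/
theorem exists_spherical_code_22_points_dim8 :
    ∀ u : ℝ, u = (2 * Real.sqrt 2 - 1) / 14 →
      ∃ x : Fin 22 → EuclideanSpace ℝ (Fin 8),
        (∀ i, ‖x i‖ = 1) ∧ ∀ i j, i ≠ j → ⟪x i, x j⟫_ℝ ≤ u := by
  intro u hu
  have hcode := isSphericalCode_code (by rw [hu]; linarith [Real.one_lt_sqrt_two])
    (by rw [hu]; linarith [Real.sqrt_two_lt_three_halves])
    (one_sub_le_of_eq_root hu)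
  obtain ⟨hnorm, hinner⟩ :=
    hcode.comp (Fintype.equivFinOfCardEq (α := Fin 8 ⊕ Fin 7 × Bool) rfl).symm.injective
  exact ⟨_, hnorm, fun _ _ hij => hinner hij⟩
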